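/- Let $X$ be a smooth projective threefold over $\mathbb{C}$ such that every curve $C \subseteq X$ has even degree with respect to a fixed polarization, $\int_X c_2(E) c_1(E)$ and $\int_X c_2(E) c_1(X)$ are even for all vector bundles $E$ (as follows from that hypothesis). Then, using Hirzebruch–Riemann–Roch, for every vector bundle $E$ on $X$ the Euler characteristic satisfies $\chi(X, E) = \tfrac{1}{2}\deg c_3(E) + s$ for some integer $s$; consequently $\deg c_3(E)$ is even. In particular, the class of a point on such $X$ does not lie in the subring of the Chow ring generated by Chern classes of vector bundles. -/
import Mathlib


/-- Let `X` be a smooth projective threefold over `ℂ` on which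
every curve has even degree, so that `∫ c₂(E)c₁(E)` and `∫ c₂(E)c₁(X)` are even
for every vector bundle `E`.  By Hirzebruch–Riemann–Roch,
`χ(X,E) = ½ deg c₃(E) - ½ deg(c₂(E)c₁(E)) - ½ deg(c₂(E)c₁(X)) + q(E)` where
`q(E) = (rk E - 1) χ(X,𝒪_X) + χ(X, det E)` is an integer.  Hence
`χ(X,E) = ½ deg c₃(E) + s` with `s ∈ ℤ`, so `deg c₃(E)` is even for every
vector bundle `E`; in particular the class of a point (of degree `1`) is not an
integral combination of the classes `c₃(E)`, hence does not lie in the subring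
of the Chow ring generated by Chern classes of vector bundles.

We abstract the situation: `VB` is the collection of vector bundles on `X`,
`chi E = χ(X,E)`, `degc3 E = deg c₃(E)`, `degc2c1 E = deg(c₂(E)c₁(E))`,
`degc2c1X E = deg(c₂(E)c₁(X))`, `rk` the rank, `chiO = χ(X,𝒪_X)`,
`chidet E = χ(X, det E)`; `hHRR` is the Hirzebruch–Riemann–Roch identity
(multiplied by 2 to stay in `ℤ`). -/
theorem stmt_6 (VB : Type*)
    (chi degc3 degc2c1 degc2c1X chidet : VB → ℤ) (rk : VB → ℕ) (chiO : ℤ)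
    (hHRR : ∀ E : VB, 2 * chi E =
      degc3 E - degc2c1 E - degc2c1X E + 2 * (((rk E : ℤ) - 1) * chiO + chidet E))
    (heven1 : ∀ E : VB, Even (degc2c1 E))
    (heven2 : ∀ E : VB, Even (degc2c1X E)) :
    (∀ E : VB, ∃ s : ℤ, 2 * chi E = degc3 E + 2 * s) ∧
    (∀ E : VB, Even (degc3 E)) ∧
    (1 : ℤ) ∉ AddSubgroup.closure (Set.range degc3) := by
  have heven : ∀ E : VB, Even (degc3 E) := by
    intro E
    obtain ⟨a, ha⟩ := heven1 E
    obtain ⟨b, hb⟩ := heven2 E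
    have h := hHRR E
    exact ⟨chi E + a + b - (((rk E : ℤ) - 1) * chiO + chidet E), by linarith⟩
  refine ⟨?_, heven, ?_⟩
  · intro E
    obtain ⟨a, ha⟩ := heven1 E
    obtain ⟨b, hb⟩ := heven2 E
    exact ⟨(((rk E : ℤ) - 1) * chiO + chidet E) - a - b,
      by have := hHRR E; linarith⟩
  · intro h
    have : Even (1 : ℤ) := by
      refine AddSubgroup.closure_induction (p := fun x _ => Even x) ?_ ?_ ?_ ?_ h
      · rintro x ⟨E, rfl⟩; exact heven E
      · exact Even.zero
      · intro x y _ _ hx hy; exact hx.add hy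
      · intro x _ hx; exact hx.neg
    simp [Int.even_iff] at this
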